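/- (Nonlocal cross helicity conservation law) Let u, B, ρ, S, T, h, r be smooth fields on ℝ × ℝ³ (u and B ℝ³-valued, the rest scalar) with ρ > 0 everywhere, let μ₀ > 0 be a constant, and assume: Faraday's equation ∂B/∂t − ∇×(u×B) = 0; Gauss's law ∇·B = 0; the MHD momentum equation ∂u/∂t − u×(∇×u) + ∇(h + |u|²/2) − ((∇×B)×B)/(μ₀ρ) = T∇S; the mass continuity equation ∂ρ/∂t + ∇·(ρu) = 0; the entropy advection equation ∂S/∂t + u·∇S = 0; and the nonlocal-potential equation (∂/∂t + u·∇)r = −T. Then ∂/∂t [ B·(u + r∇S) ] + ∇·{ u [ B·(u + r∇S) ] + (h − |u|²/2) B } = 0. -/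

import Mathlib

noncomputable section

/-- Vectors in ℝ³. -/
abbrev Vec3 : Type := Fin 3 → ℝ

/-- Points of space-time: `(t, x)` with `t : ℝ`, `x : Fin 3 → ℝ`. -/
abbrev Pt : Type := ℝ × Vec3

/-- Euclidean dot product on ℝ³. -/
def dot3 (a b : Vec3) : ℝ := ∑ i, a i * b i

/-- Cross product on ℝ³. -/
def cross3 (a b : Vec3) : Vec3 :=
  ![a 1 * b 2 - a 2 * b 1, a 2 * b 0 - a 0 * b 2, a 0 * b 1 - a 1 * b 0]

/-- Spatial partial derivative ∂f/∂xᵢ of a scalar field. -/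
def pd (i : Fin 3) (f : Pt → ℝ) (p : Pt) : ℝ :=
  fderiv ℝ (fun x => f (p.1, x)) p.2 (Pi.single i 1)

/-- Time derivative ∂f/∂t of a scalar field. -/
def dt (f : Pt → ℝ) (p : Pt) : ℝ := deriv (fun s => f (s, p.2)) p.1

/-- Time derivative of a vector field, componentwise. -/
def dtVec (F : Pt → Vec3) (p : Pt) : Vec3 := fun i => dt (fun q => F q i) p

/-- Spatial gradient ∇f of a scalar field. -/
def grad3 (f : Pt → ℝ) (p : Pt) : Vec3 := fun i => pd i f p

/-- Spatial divergence ∇·F of a vector field. -/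
def div3 (F : Pt → Vec3) (p : Pt) : ℝ := ∑ i, pd i (fun q => F q i) p

/-- Spatial curl ∇×F of a vector field. -/
def curl3 (F : Pt → Vec3) (p : Pt) : Vec3 :=
  ![pd 1 (fun q => F q 2) p - pd 2 (fun q => F q 1) p,
    pd 2 (fun q => F q 0) p - pd 0 (fun q => F q 2) p,
    pd 0 (fun q => F q 1) p - pd 1 (fun q => F q 0) p]

/-- Directional derivative (u·∇)f of a scalar field. -/
def dirD (u : Pt → Vec3) (f : Pt → ℝ) (p : Pt) : ℝ := ∑ i, u p i * pd i f p

/-- Directional derivative (u·∇)F of a vector field. -/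
def dirDVec (u F : Pt → Vec3) (p : Pt) : Vec3 :=
  fun j => ∑ i, u p i * pd i (fun q => F q j) p

/-- (∇u)ᵀ·A, the vector with i-th component ∑ⱼ (∂uʲ/∂xⁱ) Aⱼ. -/
def gradTdot (u A : Pt → Vec3) (p : Pt) : Vec3 :=
  fun i => ∑ j, pd i (fun q => u q j) p * A p j

/-- A field is smooth when it is C^∞ jointly in time and space. -/
def SmoothS (f : Pt → ℝ) : Prop := ContDiff ℝ (⊤ : ℕ∞) f

/-- A vector field is smooth when it is C^∞ jointly in time and space. -/
def SmoothV (F : Pt → Vec3) : Prop := ContDiff ℝ (⊤ : ℕ∞) F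

/-! Write `w = u + r∇S` and `g = h - |u|²/2`. Since `B` is frozen in (Faraday's law and
`∇·B = 0`), the left-hand side equals `B·((∂ₜ + L_u) w + ∇g)`, where the Lie derivative `L_u`
acts on `w` as on a 1-form. The Weber transformation evaluates this transport: the momentum
equation gives `(∂ₜ + L_u) u = T∇S - ∇g + F` with `F = (∇×B)×B/(μ₀ρ)`, while `Dr/Dt = -T` and
`DS/Dt = 0` give `(∂ₜ + L_u)(r∇S) = -T∇S`. So `(∂ₜ + L_u) w + ∇g = F`, and `B·F = 0`. -/

section Calculus

variable {f g : Pt → ℝ} {p : Pt}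

theorem pd_eq_fderiv (hf : DifferentiableAt ℝ f p) (i : Fin 3) :
    pd i f p = fderiv ℝ f p (0, Pi.single i 1) := by
  have hslice : HasFDerivAt (fun x : Vec3 => ((p.1, x) : Pt))
      ((0 : Vec3 →L[ℝ] ℝ).prod (ContinuousLinearMap.id ℝ Vec3)) p.2 :=
    (hasFDerivAt_const p.1 p.2).prodMk (hasFDerivAt_id p.2)
  have hf' : HasFDerivAt (fun x => f (p.1, x)) _ p.2 := hf.hasFDerivAt.comp p.2 hslice
  rw [pd, hf'.fderiv]
  rfl

theorem dt_eq_fderiv (hf : DifferentiableAt ℝ f p) : dt f p = fderiv ℝ f p (1, 0) :=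
  (hf.hasFDerivAt.comp_hasDerivAt p.1
    ((hasDerivAt_id p.1).prodMk (hasDerivAt_const p.1 p.2))).deriv

theorem pd_add (hf : DifferentiableAt ℝ f p) (hg : DifferentiableAt ℝ g p) (i : Fin 3) :
    pd i (fun q => f q + g q) p = pd i f p + pd i g p := by
  rw [pd_eq_fderiv (f := fun q => f q + g q) (hf.add hg), pd_eq_fderiv hf, pd_eq_fderiv hg,
    fderiv_fun_add hf hg]
  rfl

theorem pd_sub (hf : DifferentiableAt ℝ f p) (hg : DifferentiableAt ℝ g p) (i : Fin 3) :
    pd i (fun q => f q - g q) p = pd i f p - pd i g p := by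
  rw [pd_eq_fderiv (f := fun q => f q - g q) (hf.sub hg), pd_eq_fderiv hf, pd_eq_fderiv hg,
    fderiv_fun_sub hf hg]
  rfl

theorem pd_mul (hf : DifferentiableAt ℝ f p) (hg : DifferentiableAt ℝ g p) (i : Fin 3) :
    pd i (fun q => f q * g q) p = pd i f p * g p + f p * pd i g p := by
  rw [pd_eq_fderiv (f := fun q => f q * g q) (hf.mul hg), pd_eq_fderiv hf, pd_eq_fderiv hg,
    fderiv_fun_mul hf hg]
  simp only [add_apply, smul_apply, smul_eq_mul]
  ring

theorem pd_const (c : ℝ) (i : Fin 3) : pd i (fun _ => c) p = 0 := by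
  simp [pd]

theorem pd_div_const (hf : DifferentiableAt ℝ f p) (c : ℝ) (i : Fin 3) :
    pd i (fun q => f q / c) p = pd i f p / c := by
  simp only [div_eq_mul_inv]
  rw [pd_mul hf (differentiableAt_const c⁻¹), pd_const]
  ring

theorem dt_add (hf : DifferentiableAt ℝ f p) (hg : DifferentiableAt ℝ g p) :
    dt (fun q => f q + g q) p = dt f p + dt g p := by
  rw [dt_eq_fderiv (f := fun q => f q + g q) (hf.add hg), dt_eq_fderiv hf, dt_eq_fderiv hg,
    fderiv_fun_add hf hg]
  rfl

theorem dt_mul (hf : DifferentiableAt ℝ f p) (hg : DifferentiableAt ℝ g p) :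
    dt (fun q => f q * g q) p = dt f p * g p + f p * dt g p := by
  rw [dt_eq_fderiv (f := fun q => f q * g q) (hf.mul hg), dt_eq_fderiv hf, dt_eq_fderiv hg,
    fderiv_fun_mul hf hg]
  simp only [add_apply, smul_apply, smul_eq_mul]
  ring

theorem pd_eq_fderiv_fun (hf : Differentiable ℝ f) (i : Fin 3) :
    pd i f = fun q => fderiv ℝ f q (0, Pi.single i 1) :=
  funext fun q => pd_eq_fderiv (hf q) i

theorem dt_eq_fderiv_fun (hf : Differentiable ℝ f) : dt f = fun q => fderiv ℝ f q (1, 0) :=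
  funext fun q => dt_eq_fderiv (hf q)

theorem contDiff_pd {m n : WithTop ℕ∞} (hf : ContDiff ℝ n f) (hmn : m + 1 ≤ n) (i : Fin 3) :
    ContDiff ℝ m (pd i f) := by
  rw [pd_eq_fderiv_fun ((hf.of_le (le_add_self.trans hmn)).differentiable one_ne_zero)]
  exact (hf.fderiv_right hmn).clm_apply contDiff_const

theorem contDiff_dt {m n : WithTop ℕ∞} (hf : ContDiff ℝ n f) (hmn : m + 1 ≤ n) :
    ContDiff ℝ m (dt f) := by
  rw [dt_eq_fderiv_fun ((hf.of_le (le_add_self.trans hmn)).differentiable one_ne_zero)]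
  exact (hf.fderiv_right hmn).clm_apply contDiff_const

theorem contDiff_grad3 {m n : WithTop ℕ∞} (hf : ContDiff ℝ n f) (hmn : m + 1 ≤ n) :
    ContDiff ℝ m (grad3 f) :=
  contDiff_pi.2 fun i => contDiff_pd hf hmn i

theorem fderiv_fderiv_apply_comm (hf : ContDiff ℝ 2 f) (p v w : Pt) :
    fderiv ℝ (fun q => fderiv ℝ f q v) p w = fderiv ℝ (fun q => fderiv ℝ f q w) p v := by
  have hdf : Differentiable ℝ (fderiv ℝ f) :=
    (hf.fderiv_right le_rfl).differentiable one_ne_zero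
  rw [fderiv_clm_apply (hdf p) (differentiableAt_const v),
    fderiv_clm_apply (hdf p) (differentiableAt_const w)]
  simpa using (hf.contDiffAt.isSymmSndFDerivAt (by simp)) w v

theorem differentiable_fderiv_apply (hf : ContDiff ℝ 2 f) (v : Pt) :
    Differentiable ℝ (fun q => fderiv ℝ f q v) :=
  ((hf.fderiv_right le_rfl).clm_apply contDiff_const).differentiable one_ne_zero

theorem pd_pd_comm (hf : ContDiff ℝ 2 f) (i j : Fin 3) (p : Pt) :
    pd i (pd j f) p = pd j (pd i f) p := by
  have hf1 : Differentiable ℝ f := hf.differentiable two_ne_zero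
  rw [pd_eq_fderiv_fun hf1 i, pd_eq_fderiv_fun hf1 j,
    pd_eq_fderiv (differentiable_fderiv_apply hf _ p),
    pd_eq_fderiv (differentiable_fderiv_apply hf _ p), fderiv_fderiv_apply_comm hf]

theorem dt_pd_comm (hf : ContDiff ℝ 2 f) (i : Fin 3) (p : Pt) :
    dt (pd i f) p = pd i (dt f) p := by
  have hf1 : Differentiable ℝ f := hf.differentiable two_ne_zero
  rw [pd_eq_fderiv_fun hf1 i, dt_eq_fderiv_fun hf1,
    pd_eq_fderiv (differentiable_fderiv_apply hf _ p),
    dt_eq_fderiv (differentiable_fderiv_apply hf _ p), fderiv_fderiv_apply_comm hf]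

end Calculus

section VectorCalculus

variable {u B F G : Pt → Vec3} {f g : Pt → ℝ} {p : Pt}

theorem dot3_smul_cross3_self (c : ℝ) (a b : Vec3) : dot3 b (c • cross3 a b) = 0 := by
  change dotProduct b (c • crossProduct a b) = 0
  rw [dotProduct_smul, dot_cross_self, smul_zero]

theorem cross3_curl3_self (u : Pt → Vec3) (p : Pt) :
    cross3 (u p) (curl3 u p) = gradTdot u u p - dirDVec u u p := by
  ext i
  fin_cases i <;>
    simp only [cross3, curl3, gradTdot, dirDVec, Fin.sum_univ_three, Pi.sub_apply, Fin.zero_eta,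
      Fin.mk_one, Fin.reduceFinMk, Matrix.cons_val] <;> ring

@[fun_prop]
theorem DifferentiableAt.dot3 (hF : DifferentiableAt ℝ F p) (hG : DifferentiableAt ℝ G p) :
    DifferentiableAt ℝ (fun q => dot3 (F q) (G q)) p := by
  unfold _root_.dot3
  fun_prop

theorem grad3_const (c : ℝ) (p : Pt) : grad3 (fun _ => c) p = 0 :=
  funext fun i => pd_const c i

theorem grad3_add (hf : DifferentiableAt ℝ f p) (hg : DifferentiableAt ℝ g p) :
    grad3 (fun q => f q + g q) p = grad3 f p + grad3 g p :=
  funext fun i => pd_add hf hg i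

theorem grad3_sub (hf : DifferentiableAt ℝ f p) (hg : DifferentiableAt ℝ g p) :
    grad3 (fun q => f q - g q) p = grad3 f p - grad3 g p :=
  funext fun i => pd_sub hf hg i

theorem grad3_half_dot3_self (hu : DifferentiableAt ℝ u p) :
    grad3 (fun q => dot3 (u q) (u q) / 2) p = gradTdot u u p := by
  ext i
  simp (disch := fun_prop) only [grad3, gradTdot, dot3, Fin.sum_univ_three, pd_div_const, pd_add,
    pd_mul]
  ring

theorem dt_dot3 (hF : DifferentiableAt ℝ F p) (hG : DifferentiableAt ℝ G p) :
    dt (fun q => dot3 (F q) (G q)) p = dot3 (dtVec F p) (G p) + dot3 (F p) (dtVec G p) := by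
  simp (disch := fun_prop) only [dot3, dtVec, Fin.sum_univ_three, dt_add, dt_mul]
  ring

theorem dirD_dot3 (hF : DifferentiableAt ℝ F p) (hG : DifferentiableAt ℝ G p) :
    dirD u (fun q => dot3 (F q) (G q)) p
      = dot3 (dirDVec u F p) (G p) + dot3 (F p) (dirDVec u G p) := by
  simp (disch := fun_prop) only [dot3, dirD, dirDVec, Fin.sum_univ_three, pd_add, pd_mul]
  ring

theorem div3_add (hF : DifferentiableAt ℝ F p) (hG : DifferentiableAt ℝ G p) :
    div3 (fun q => F q + G q) p = div3 F p + div3 G p := by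
  simp (disch := fun_prop) only [div3, Fin.sum_univ_three, Pi.add_apply, pd_add]
  ring

theorem div3_smul (hf : DifferentiableAt ℝ f p) (hF : DifferentiableAt ℝ F p) :
    div3 (fun q => f q • F q) p = f p * div3 F p + dirD F f p := by
  simp (disch := fun_prop) only [div3, dirD, Fin.sum_univ_three, Pi.smul_apply, smul_eq_mul,
    pd_mul]
  ring

theorem curl3_cross3 (hu : DifferentiableAt ℝ u p) (hB : DifferentiableAt ℝ B p) :
    curl3 (fun q => cross3 (u q) (B q)) p
      = div3 B p • u p - div3 u p • B p + dirDVec B u p - dirDVec u B p := by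
  ext i
  fin_cases i <;>
    simp (disch := fun_prop) only [curl3, cross3, div3, dirDVec, Fin.sum_univ_three, Pi.add_apply,
      Pi.sub_apply, Pi.smul_apply, smul_eq_mul, Fin.zero_eta, Fin.mk_one, Fin.reduceFinMk,
      Matrix.cons_val, pd_sub, pd_mul] <;>
    ring

end VectorCalculus

/-- `(∂ₜ + L_u) A` for `A` regarded as a 1-form: `∂ₜA + (u·∇)A + (∇u)ᵀ·A`. -/
def oneFormTransport (u A : Pt → Vec3) (p : Pt) : Vec3 :=
  dtVec A p + dirDVec u A p + gradTdot u A p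

section Transport

variable {u F G : Pt → Vec3} {r S : Pt → ℝ} {p : Pt}

theorem oneFormTransport_add (hF : DifferentiableAt ℝ F p) (hG : DifferentiableAt ℝ G p) :
    oneFormTransport u (fun q => F q + G q) p
      = oneFormTransport u F p + oneFormTransport u G p := by
  ext i
  simp (disch := fun_prop) only [oneFormTransport, dtVec, dirDVec, gradTdot, Pi.add_apply,
    Fin.sum_univ_three, dt_add, pd_add]
  ring

theorem oneFormTransport_self (u : Pt → Vec3) (p : Pt) :
    oneFormTransport u u p = dtVec u p - cross3 (u p) (curl3 u p) + 2 • gradTdot u u p := by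
  rw [oneFormTransport, cross3_curl3_self]
  module

theorem oneFormTransport_smul_grad3 (hu : DifferentiableAt ℝ u p) (hr : DifferentiableAt ℝ r p)
    (hS : ContDiff ℝ 2 S) :
    oneFormTransport u (fun q => r q • grad3 S q) p
      = (dt r p + dirD u r p) • grad3 S p + r p • grad3 (fun q => dt S q + dirD u S q) p := by
  have hS1 : ∀ i, Differentiable ℝ (pd i S) := fun i =>
    (contDiff_pd hS (by norm_num) i).differentiable one_ne_zero
  have hSt : Differentiable ℝ (dt S) := (contDiff_dt hS (by norm_num)).differentiable one_ne_zero
  ext i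
  simp (disch := fun_prop) only [oneFormTransport, dtVec, dirDVec, gradTdot, grad3, dirD,
    Pi.add_apply, Pi.smul_apply, smul_eq_mul, Fin.sum_univ_three, dt_mul, pd_add, pd_mul,
    dt_pd_comm hS, pd_pd_comm hS i]
  ring

end Transport

theorem dt_dot3_add_div3_of_induction {u B w : Pt → Vec3} {g : Pt → ℝ} {p : Pt}
    (hu : DifferentiableAt ℝ u p) (hB : DifferentiableAt ℝ B p) (hw : DifferentiableAt ℝ w p)
    (hg : DifferentiableAt ℝ g p)
    (hind : dtVec B p = curl3 (fun q => cross3 (u q) (B q)) p) :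
    dt (fun q => dot3 (B q) (w q)) p + div3 (fun q => dot3 (B q) (w q) • u q + g q • B q) p
      = dot3 (B p) (oneFormTransport u w p + grad3 g p)
        + div3 B p * (dot3 (u p) (w p) + g p) := by
  rw [dt_dot3 hB hw, hind, div3_add (by fun_prop) (by fun_prop), div3_smul (by fun_prop) hu,
    div3_smul hg hB, dirD_dot3 hB hw, curl3_cross3 hu hB]
  simp only [oneFormTransport, dot3, dirD, grad3, dirDVec, gradTdot, Fin.sum_univ_three,
    Pi.add_apply, Pi.sub_apply, Pi.smul_apply, smul_eq_mul]
  ring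

theorem nonlocal_cross_helicity_conservation_general
    (u B : Pt → Vec3) (ρ S T h r : Pt → ℝ) (μ₀ : ℝ)
    (hu : SmoothV u) (hB : SmoothV B) (hS : SmoothS S)
    (hh : SmoothS h) (hr : SmoothS r)
    (hfar : ∀ p : Pt,
      dtVec B p - curl3 (fun q => cross3 (u q) (B q)) p = 0)
    (hgauss : ∀ p : Pt, div3 B p = 0)
    (hmom : ∀ p : Pt,
      dtVec u p - cross3 (u p) (curl3 u p)
        + grad3 (fun q => h q + dot3 (u q) (u q) / 2) p
        - (μ₀ * ρ p)⁻¹ • cross3 (curl3 B p) (B p)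
        = T p • grad3 S p)
    (hSadv : ∀ p : Pt, dt S p + dirD u S p = 0)
    (hrev : ∀ p : Pt, dt r p + dirD u r p = - T p) :
    ∀ p : Pt,
      dt (fun q => dot3 (B q) (u q + r q • grad3 S q)) p
        + div3 (fun q =>
            dot3 (B q) (u q + r q • grad3 S q) • u q
              + (h q - dot3 (u q) (u q) / 2) • B q) p = 0 := by
  intro p
  have hu' : Differentiable ℝ u := hu.differentiable (by simp)
  have hB' : Differentiable ℝ B := hB.differentiable (by simp)
  have hh' : Differentiable ℝ h := hh.differentiable (by simp)
  have hr' : Differentiable ℝ r := hr.differentiable (by simp)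
  have hS2 : ContDiff ℝ 2 S := hS.of_le (WithTop.coe_le_coe.mpr le_top)
  have hgradS : Differentiable ℝ (grad3 S) :=
    (contDiff_grad3 hS (m := 1) (WithTop.coe_le_coe.mpr le_top)).differentiable one_ne_zero
  have hweber : oneFormTransport u (fun q => u q + r q • grad3 S q) p
        = (μ₀ * ρ p)⁻¹ • cross3 (curl3 B p) (B p)
          - grad3 (fun q => h q - dot3 (u q) (u q) / 2) p := by
    have hmom' := hmom p
    rw [grad3_add (hh' p) (by fun_prop), grad3_half_dot3_self (hu' p)] at hmom'
    rw [oneFormTransport_add (hu' p) (by fun_prop), oneFormTransport_self,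
      oneFormTransport_smul_grad3 (hu' p) (hr' p) hS2, hrev p, funext hSadv, grad3_const,
      grad3_sub (hh' p) (by fun_prop), grad3_half_dot3_self (hu' p)]
    linear_combination (norm := module) hmom'
  rw [dt_dot3_add_div3_of_induction (hu' p) (hB' p) (by fun_prop) (by fun_prop)
      (sub_eq_zero.mp (hfar p)),
    hweber, sub_add_cancel, dot3_smul_cross3_self, hgauss p, zero_mul, add_zero]

/-- nonlocal cross helicity conservation law: for a
    non-barotropic MHD flow with nonlocal potential r, the quantity
    B·(u + r∇S) obeys a local conservation law. -/
theorem nonlocal_cross_helicity_conservation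
    (u B : Pt → Vec3) (ρ S T h r : Pt → ℝ) (μ₀ : ℝ)
    (hu : SmoothV u) (hB : SmoothV B) (hρ : SmoothS ρ) (hS : SmoothS S)
    (hT : SmoothS T) (hh : SmoothS h) (hr : SmoothS r)
    (hρpos : ∀ p : Pt, 0 < ρ p) (hμ₀ : 0 < μ₀)
    (hfar : ∀ p : Pt,
      dtVec B p - curl3 (fun q => cross3 (u q) (B q)) p = 0)
    (hgauss : ∀ p : Pt, div3 B p = 0)
    (hmom : ∀ p : Pt,
      dtVec u p - cross3 (u p) (curl3 u p)
        + grad3 (fun q => h q + dot3 (u q) (u q) / 2) p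
        - (μ₀ * ρ p)⁻¹ • cross3 (curl3 B p) (B p)
        = T p • grad3 S p)
    (hcont : ∀ p : Pt, dt ρ p + div3 (fun q => ρ q • u q) p = 0)
    (hSadv : ∀ p : Pt, dt S p + dirD u S p = 0)
    (hrev : ∀ p : Pt, dt r p + dirD u r p = - T p) :
    ∀ p : Pt,
      dt (fun q => dot3 (B q) (u q + r q • grad3 S q)) p
        + div3 (fun q =>
            dot3 (B q) (u q + r q • grad3 S q) • u q
              + (h q - dot3 (u q) (u q) / 2) • B q) p = 0 :=
  nonlocal_cross_helicity_conservation_general u B ρ S T h r μ₀ hu hB hS hh hr hfar hgauss hmom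
    hSadv hrev
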